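/- arXiv:1812.02502 — 6 statements merged into one kernel-verified Lean document; each statement's English description precedes it below -/
import Mathlib

section
/- Let r ≥ 2 and s ≥ 0 be integers. Define the sequence δ_0 = r/2 and δ_{j+1} = δ_j - δ_j/(1 + ∑_{i=1}^{j+1} r^i) for j ≥ 0. Then for all j ≥ 0, δ_j = (r/2) · (r^{j+1} - r^j)/(r^{j+1} - 1). -/
/-!
The sum in the recursion is a geometric sum, so `δ (j+1) = δ j * (1 - (r - 1) / (r^(j+2) - 1))`
`= δ j * r (r^(j+1) - 1) / (r^(j+2) - 1)`: the factor `r^(j+1) - 1` cancels the denominator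
of the closed form at `j` and leaves the closed form at `j + 1`.
-/

open Finset

theorem one_add_sum_Icc_pow {R : Type*} [Semiring R] (x : R) (n : ℕ) :
    1 + ∑ i ∈ Icc 1 n, x ^ i = ∑ i ∈ range (n + 1), x ^ i := by
  rw [sum_range_succ', ← Ico_add_one_right_eq_Icc, sum_Ico_eq_sum_range, add_comm, pow_zero]
  simp only [add_tsub_cancel_right, add_comm 1]

theorem one_sub_inv_geom_sum {K : Type*} [Field K] (x : K) (m : ℕ) (hx : x ^ (m + 1) ≠ 1) :
    1 - (∑ i ∈ range (m + 1), x ^ i)⁻¹ = x * (x ^ m - 1) / (x ^ (m + 1) - 1) := by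
  have hx1 : x ≠ 1 := by rintro rfl; simp at hx
  have hden : x ^ (m + 1) - 1 ≠ 0 := sub_ne_zero.mpr hx
  rw [geom_sum_eq hx1, inv_div]
  field_simp
  ring

/-- For `r ≥ 2`, the sequence `δ 0 = r/2`,
`δ (j+1) = δ j - δ j / (1 + ∑_{i=1}^{j+1} r^i)` has closed form
`δ j = (r/2) * (r^(j+1) - r^j) / (r^(j+1) - 1)`. -/
theorem delta_closed_form (r : ℕ) (hr : 2 ≤ r) (δ : ℕ → ℚ)
    (h0 : δ 0 = (r : ℚ) / 2)
    (hrec : ∀ j, δ (j + 1) = δ j - δ j / (1 + ∑ i ∈ Finset.Icc 1 (j + 1), (r : ℚ) ^ i)) :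
    ∀ j, δ j = ((r : ℚ) / 2) * ((r : ℚ) ^ (j + 1) - (r : ℚ) ^ j) / ((r : ℚ) ^ (j + 1) - 1) := by
  have hr1 : (1 : ℚ) < r := by exact_mod_cast hr
  have hpow (k : ℕ) : (r : ℚ) ^ (k + 1) - 1 ≠ 0 :=
    sub_ne_zero.mpr (one_lt_pow₀ hr1 k.succ_ne_zero).ne'
  intro j
  induction j with
  | zero =>
    rw [h0, pow_zero, mul_div_assoc, div_self (hpow 0), mul_one]
  | succ j ih =>
    have hstep : δ (j + 1) = δ j * ((r : ℚ) * ((r : ℚ) ^ (j + 1) - 1) / ((r : ℚ) ^ (j + 2) - 1)) := by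
      rw [hrec, div_eq_mul_inv, ← mul_one_sub, one_add_sum_Icc_pow,
        one_sub_inv_geom_sum _ _ (sub_ne_zero.mp (hpow (j + 1)))]
    rw [hstep, ih]
    field_simp [hpow j, hpow (j + 1)]
    ring
end

section
/- Every d-regular bipartite graph (with finitely many vertices) admits a partition of its edge set into d pairwise disjoint perfect matchings; equivalently, its edges can be properly colored with exactly d colors. -/
/-!
A `d`-regular graph with `d > 0` satisfies Hall's condition: counting edges, a set `s` of vertices
sends `d * |s|` edges into its neighbourhood `N(s)`, which receives at most `d * |N(s)|` edges.
So a regular bipartite graph of positive degree has a perfect matching, and deleting it leaves a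
bipartite graph that is regular of one degree less; induction on `d` peels off `d` disjoint
perfect matchings.
-/

open Finset Function

namespace SimpleGraph

variable {V : Type*}

/-- Perfect matchings are encoded as spanning graphs in which every vertex has exactly one
neighbour. -/
structure IsOneFactorization {ι : Type*} (G : SimpleGraph V) (M : ι → SimpleGraph V) : Prop where
  existsUnique_adj : ∀ i v, ∃! w, (M i).Adj v w
  pairwise_disjoint : Pairwise (Disjoint on M)
  iSup_eq : ⨆ i, M i = G

theorem isOneFactorization_bot : (⊥ : SimpleGraph V).IsOneFactorization (Fin.elim0 : Fin 0 → _) :=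
  ⟨fun i => i.elim0, fun i => i.elim0, iSup_of_empty _⟩

theorem IsOneFactorization.le {ι : Type*} {G : SimpleGraph V} {M : ι → SimpleGraph V}
    (hM : G.IsOneFactorization M) (i : ι) : M i ≤ G :=
  hM.iSup_eq ▸ le_iSup M i

theorem IsOneFactorization.cons {G H : SimpleGraph V} {n : ℕ} {M : Fin n → SimpleGraph V}
    (hH : ∀ v, ∃! w, H.Adj v w) (hle : H ≤ G) (hM : (G \ H).IsOneFactorization M) :
    G.IsOneFactorization (Fin.cons H M : Fin (n + 1) → SimpleGraph V) where
  existsUnique_adj := Fin.cases hH hM.existsUnique_adj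
  pairwise_disjoint := by
    have hdisj (i : Fin n) : Disjoint H (M i) := disjoint_sdiff_self_right.mono_right (hM.le i)
    exact pairwise_fin_succ_iff.mpr ⟨fun i => (hdisj i).symm, hdisj, hM.pairwise_disjoint⟩
  iSup_eq := by
    have hcons : ⨆ i, (Fin.cons H M : Fin (n + 1) → SimpleGraph V) i = H ⊔ ⨆ i, M i :=
      le_antisymm (iSup_le (Fin.cases le_sup_left fun i => le_sup_of_le_right (le_iSup M i)))
        (sup_le (le_iSup_of_le 0 le_rfl) (iSup_le fun i => le_iSup_of_le i.succ le_rfl))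
    rw [hcons, hM.iSup_eq, sup_sdiff_cancel_right hle]

theorem existsUnique_mem_edgeSet_of_existsUnique_adj {G : SimpleGraph V} {v : V}
    (h : ∃! w, G.Adj v w) : ∃! e, e ∈ G.edgeSet ∧ v ∈ e := by
  obtain ⟨w, hw, huniq⟩ := h
  refine ⟨s(v, w), ⟨hw, Sym2.mem_mk_left v w⟩, ?_⟩
  rintro e ⟨he, hve⟩
  obtain ⟨u, rfl⟩ := Sym2.mem_iff_exists.mp hve
  rw [huniq u he]

theorem IsRegularOfDegree.eq_bot {G : SimpleGraph V} [G.LocallyFinite]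
    (hreg : G.IsRegularOfDegree 0) : G = ⊥ := by
  ext v w
  simpa using (G.degree_eq_zero v).mp (hreg v) w

theorem IsRegularOfDegree.sdiff [Fintype V] [DecidableEq V] {G H : SimpleGraph V}
    [DecidableRel G.Adj] [DecidableRel H.Adj] {a b : ℕ} (hG : G.IsRegularOfDegree a)
    (hH : H.IsRegularOfDegree b) (hle : H ≤ G) : (G \ H).IsRegularOfDegree (a - b) := by
  intro v
  rw [← card_neighborFinset_eq_degree, neighborFinset_sdiff,
    card_sdiff_of_subset fun w => by simpa using @hle v w,
    card_neighborFinset_eq_degree, card_neighborFinset_eq_degree, hG v, hH v]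

theorem IsRegularOfDegree.ncard_le_ncard_iUnion_neighborSet [Fintype V] {G : SimpleGraph V}
    [DecidableRel G.Adj] {d : ℕ} (hreg : G.IsRegularOfDegree d) (hd : 0 < d) (s : Set V) :
    s.ncard ≤ (⋃ x ∈ s, G.neighborSet x).ncard := by
  classical
  set t := ⋃ x ∈ s, G.neighborSet x
  rw [Set.ncard_eq_toFinset_card' s, Set.ncard_eq_toFinset_card' t]
  refine Nat.le_of_mul_le_mul_right (card_mul_le_card_mul G.Adj ?_ ?_) hd
  · intro a ha
    rw [← hreg a, ← card_neighborFinset_eq_degree]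
    refine card_le_card fun b hb => ?_
    rw [mem_neighborFinset] at hb
    simp only [bipartiteAbove, mem_filter, Set.mem_toFinset]
    exact ⟨Set.mem_biUnion (Set.mem_toFinset.mp ha) hb, hb⟩
  · intro b _
    rw [← hreg b, ← card_neighborFinset_eq_degree]
    refine card_le_card fun a ha => ?_
    simp only [bipartiteBelow, mem_filter] at ha
    exact (mem_neighborFinset _ _ _).mpr ha.2.symm

theorem IsRegularOfDegree.exists_isPerfectMatching [Fintype V] {G : SimpleGraph V}
    [DecidableRel G.Adj] {d : ℕ} (hbip : G.IsBipartite) (hreg : G.IsRegularOfDegree d)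
    (hd : 0 < d) : ∃ M : G.Subgraph, M.IsPerfectMatching :=
  have ⟨_, _, hst⟩ := hbip.exists_isBipartiteWith
  exists_isPerfectMatching_of_forall_ncard_le hst (hreg.ncard_le_ncard_iUnion_neighborSet hd)

theorem IsRegularOfDegree.exists_isOneFactorization [Fintype V]
    {G : SimpleGraph V} [DecidableRel G.Adj] {d : ℕ} (hbip : G.IsBipartite)
    (hreg : G.IsRegularOfDegree d) : ∃ M : Fin d → SimpleGraph V, G.IsOneFactorization M := by
  induction d generalizing G with
  | zero => exact ⟨_, hreg.eq_bot ▸ isOneFactorization_bot⟩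
  | succ d ih =>
    classical
    obtain ⟨P, hP⟩ := hreg.exists_isPerfectMatching hbip d.succ_pos
    have hPadj : ∀ v, ∃! w, P.spanningCoe.Adj v w := Subgraph.isPerfectMatching_iff.mp hP
    have hPreg : P.spanningCoe.IsRegularOfDegree 1 := fun v =>
      degree_eq_one_iff_existsUnique_adj.mpr (hPadj v)
    obtain ⟨M, hM⟩ := ih (hbip.mono_left sdiff_le) (hreg.sdiff hPreg P.spanningCoe_le)
    exact ⟨_, hM.cons hPadj P.spanningCoe_le⟩

end SimpleGraph

theorem regular_bipartite_edge_coloring_general {V : Type*} [Fintype V]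
    (G : SimpleGraph V) [DecidableRel G.Adj] (d : ℕ)
    (hreg : G.IsRegularOfDegree d) (hbip : G.Colorable 2) :
    ∃ M : Fin d → Set (Sym2 V),
      (∀ i, M i ⊆ G.edgeSet) ∧
      (Pairwise fun i j => Disjoint (M i) (M j)) ∧
      (⋃ i, M i) = G.edgeSet ∧
      (∀ i, ∀ v : V, ∃! e : Sym2 V, e ∈ M i ∧ v ∈ e) := by
  obtain ⟨M, hM⟩ := hreg.exists_isOneFactorization hbip
  refine ⟨fun i => (M i).edgeSet, fun i => SimpleGraph.edgeSet_mono (hM.le i),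
    fun i j hij => SimpleGraph.disjoint_edgeSet.mpr (hM.pairwise_disjoint hij), ?_,
    fun i v => SimpleGraph.existsUnique_mem_edgeSet_of_existsUnique_adj (hM.existsUnique_adj i v)⟩
  rw [← SimpleGraph.edgeSet_iSup, hM.iSup_eq]

/-- Every `d`-regular bipartite graph on finitely many vertices admits a partition of
its edge set into `d` pairwise disjoint perfect matchings. -/
theorem regular_bipartite_edge_coloring {V : Type*} [Fintype V] [DecidableEq V]
    (G : SimpleGraph V) [DecidableRel G.Adj] (d : ℕ)
    (hreg : G.IsRegularOfDegree d) (hbip : G.Colorable 2) :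
    ∃ M : Fin d → Set (Sym2 V),
      (∀ i, M i ⊆ G.edgeSet) ∧
      (Pairwise fun i j => Disjoint (M i) (M j)) ∧
      (⋃ i, M i) = G.edgeSet ∧
      (∀ i, ∀ v : V, ∃! e : Sym2 V, e ∈ M i ∧ v ∈ e) :=
  regular_bipartite_edge_coloring_general G d hreg hbip
end

section
/- Let C be the binary code defined as the null space over F_2 of the vertex-edge incidence matrix of a finite graph G. If G has girth at least t+1, then any set of at most t erased code symbols (edges) can be recovered sequentially: there is an ordering of the erased edges such that each can be recovered using a parity check (vertex) incident to exactly one not-yet-recovered erased edge. -/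
/-!
The erased edges `E` span a subgraph with at most `t` edges, and every cycle of that subgraph
is a cycle of `G`, so it would have length at most `t` < girth: the subgraph is a forest. The
first vertex of a longest path in a nonempty forest is a leaf, i.e. lies on exactly one erased
edge; that edge is recovered first, and the rest of `E` is ordered by induction.
-/

open Finset

namespace SimpleGraph

variable {V : Type*} {G : SimpleGraph V}

lemma IsAcyclic.exists_existsUnique_adj [Finite G.edgeSet] (hG : G.IsAcyclic) {a b : V}
    (hab : G.Adj a b) : ∃ v, ∃! w, G.Adj v w := by
  have : Nonempty V := ⟨a⟩
  obtain ⟨u, v, p, hp, hlongest⟩ := Walk.exists_isPath_forall_isPath_length_le_length G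
  have hnil : ¬p.Nil := by
    rw [← Walk.length_eq_zero_iff]
    have := hlongest _ _ (Walk.cons hab .nil) (by simp [hab.ne])
    simp only [Walk.length_cons, Walk.length_nil] at this
    omega
  refine ⟨u, p.snd, p.adj_snd hnil, fun w hw => hG.eq_snd_of_adj_start hp hw ?_⟩
  by_contra hwp
  have := hlongest _ _ (p.cons hw.symm) (hp.cons hwp)
  simp only [Walk.length_cons] at this
  omega

lemma isAcyclic_fromEdgeSet_of_card_lt_egirth {E : Finset (Sym2 V)}
    (hE : (E : Set (Sym2 V)) ⊆ G.edgeSet) (hcard : (#E : ℕ∞) < G.egirth) :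
    (fromEdgeSet (E : Set (Sym2 V))).IsAcyclic := by
  classical
  intro a c hc
  have hle : fromEdgeSet (E : Set (Sym2 V)) ≤ G :=
    (fromEdgeSet_le G).mpr fun _ he => hE he.1
  have hedges : c.edges.toFinset ⊆ E := fun e he => by
    have := c.edges_subset_edgeSet (List.mem_toFinset.mp he)
    rw [edgeSet_fromEdgeSet] at this
    exact this.1
  have : G.egirth ≤ #E :=
    calc G.egirth ≤ (fromEdgeSet (E : Set (Sym2 V))).egirth := egirth_anti hle
      _ ≤ c.length := egirth_le_length hc
      _ = #c.edges.toFinset := by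
        rw [List.toFinset_card_of_nodup hc.edges_nodup, Walk.length_edges]
      _ ≤ #E := by exact_mod_cast card_le_card hedges
  exact hcard.not_ge this

lemma exists_mem_forall_mem_eq_of_isAcyclic_fromEdgeSet {E : Finset (Sym2 V)}
    (hacyc : (fromEdgeSet (E : Set (Sym2 V))).IsAcyclic) (hdiag : ∀ e ∈ E, ¬e.IsDiag)
    (hne : E.Nonempty) : ∃ e ∈ E, ∃ v ∈ e, ∀ e' ∈ E, v ∈ e' → e' = e := by
  have adj_iff {x y : V} : (fromEdgeSet (E : Set (Sym2 V))).Adj x y ↔ s(x, y) ∈ E ∧ x ≠ y :=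
    fromEdgeSet_adj _
  have : Finite (fromEdgeSet (E : Set (Sym2 V))).edgeSet :=
    (E.finite_toSet.subset (by simp [edgeSet_fromEdgeSet])).to_subtype
  obtain ⟨⟨a, b⟩, he₀⟩ := hne
  obtain ⟨v, w, hvw, hunique⟩ :=
    hacyc.exists_existsUnique_adj (adj_iff.mpr ⟨he₀, by simpa using hdiag _ he₀⟩)
  refine ⟨s(v, w), (adj_iff.mp hvw).1, v, Sym2.mem_mk_left v w, fun e' he' hve' => ?_⟩
  obtain ⟨x, rfl⟩ := Sym2.mem_iff_exists.mp hve'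
  rw [hunique x (adj_iff.mpr ⟨he', by simpa using hdiag _ he'⟩)]

end SimpleGraph

section Peeling

variable {V : Type*}

def IsPeelingOrder (l : List (Sym2 V)) : Prop :=
  ∀ (i : ℕ) (hi : i < l.length), ∃ v : V, v ∈ l.get ⟨i, hi⟩ ∧ ∀ e ∈ l.drop (i + 1), v ∉ e

lemma IsPeelingOrder.cons {e : Sym2 V} {l : List (Sym2 V)} {v : V} (hv : v ∈ e)
    (hvl : ∀ e' ∈ l, v ∉ e') (hl : IsPeelingOrder l) : IsPeelingOrder (e :: l) := by
  rintro (_ | i) hi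
  · exact ⟨v, hv, by simpa using hvl⟩
  · simpa using hl i (by simpa using hi)

lemma exists_nodup_isPeelingOrder [DecidableEq V] (E : Finset (Sym2 V))
    (hleaf : ∀ F ⊆ E, F.Nonempty → ∃ e ∈ F, ∃ v ∈ e, ∀ e' ∈ F, v ∈ e' → e' = e) :
    ∃ l : List (Sym2 V), l.Nodup ∧ l.toFinset = E ∧ IsPeelingOrder l := by
  induction E using Finset.strongInduction with
  | H E ih =>
  rcases E.eq_empty_or_nonempty with rfl | hne
  · exact ⟨[], List.nodup_nil, rfl, nofun⟩
  obtain ⟨e, he, v, hv, hprivate⟩ := hleaf E subset_rfl hne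
  obtain ⟨l, hnodup, hl, hpeel⟩ := ih (E.erase e) (erase_ssubset he)
    fun F hF => hleaf F (hF.trans (erase_subset e E))
  have hel : e ∉ l := by simp [← List.mem_toFinset, hl]
  refine ⟨e :: l, hnodup.cons hel, by simp [hl, insert_erase he], hpeel.cons hv ?_⟩
  intro e' he' hve'
  have he'E : e' ∈ E.erase e := hl ▸ List.mem_toFinset.mpr he'
  exact (mem_erase.mp he'E).1 (hprivate e' (mem_of_mem_erase he'E) hve')

end Peeling

/-- Sequential recovery: if `G` has girth at least `t+1`, then any set `E` of at most `t`
edges (erased code symbols of the binary code with the incidence matrix of `G` as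
parity-check matrix) can be ordered as `e_1, ..., e_s` so that each `e_j` has an endpoint
(a parity check) incident to none of the later erased edges `e_{j+1}, ..., e_s`. -/
theorem sequential_recovery_from_girth {V : Type*} [Fintype V] [DecidableEq V]
    (G : SimpleGraph V) [DecidableRel G.Adj] (t : ℕ)
    (hgirth : ((t + 1 : ℕ) : ℕ∞) ≤ G.girth)
    (E : Finset (Sym2 V)) (hE : E ⊆ G.edgeFinset) (hcard : E.card ≤ t) :
    ∃ l : List (Sym2 V), l.Nodup ∧ l.toFinset = E ∧
      ∀ (i : ℕ) (hi : i < l.length),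
        ∃ v : V, v ∈ l.get ⟨i, hi⟩ ∧ ∀ e ∈ l.drop (i + 1), v ∉ e := by
  refine exists_nodup_isPeelingOrder E fun F hFE hF => ?_
  have hFG : (F : Set (Sym2 V)) ⊆ G.edgeSet := by
    rw [← SimpleGraph.coe_edgeFinset]; exact_mod_cast hFE.trans hE
  have hF_lt : (#F : ℕ∞) < G.egirth :=
    calc (#F : ℕ∞) ≤ t := by exact_mod_cast (card_le_card hFE).trans hcard
      _ < ((t + 1 : ℕ) : ℕ∞) := by exact_mod_cast t.lt_succ_self
      _ ≤ G.girth := hgirth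
      _ ≤ G.egirth := G.egirth.natCast_toNat_le_self
  exact SimpleGraph.exists_mem_forall_mem_eq_of_isAcyclic_fromEdgeSet
    (SimpleGraph.isAcyclic_fromEdgeSet_of_card_lt_egirth hFG hF_lt)
    (fun e he => G.not_isDiag_of_mem_edgeSet (hFG he)) hF
end

section
/- (Moore bound, odd girth parameter) Any (r+1)-regular graph with girth at least t+1, where t = 2s+1 is odd, has at least 2∑_{i=0}^{s} r^i vertices. -/
/-!
Fix an edge `ab` and call the vertices at distance `i` from `a` and `i + 1` from `b` the `a`-side
sphere of radius `i`; all `a`-side and `b`-side spheres are pairwise disjoint. Two distinct paths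
with common ends close up to a cycle no longer than their total length, so below the girth a
vertex has at most one neighbour closer to `a` and none at the same distance. Hence every vertex of
a side sphere of radius `i < s` has `r` neighbours in the sphere of radius `i + 1`, each of which
has only one neighbour back, and the side spheres of radius `i ≤ s` have at least `r ^ i` vertices.
-/

namespace SimpleGraph

variable {V : Type*} {G : SimpleGraph V}

theorem egirth_le_length_add_length_of_ne {u v : V} {p q : G.Walk u v} (hp : p.IsPath)
    (hq : q.IsPath) (hpq : p ≠ q) : G.egirth ≤ p.length + q.length := by
  classical
  set H := fromEdgeSet {e | e ∈ p.edges ∨ e ∈ q.edges}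
  have hHG : H ≤ G := by
    intro x y h
    rcases (fromEdgeSet_adj _).mp h |>.1 with h | h
    exacts [p.adj_of_mem_edges h, q.adj_of_mem_edges h]
  have mem_H {e} (he : e ∈ p.edges ∨ e ∈ q.edges) : e ∈ H.edgeSet := by
    refine edgeSet_fromEdgeSet _ ▸ ⟨he, ?_⟩
    rcases he with he | he
    exacts [G.not_isDiag_of_mem_edgeSet (p.edges_subset_edgeSet he),
      G.not_isDiag_of_mem_edgeSet (q.edges_subset_edgeSet he)]
  have hH : ¬ H.IsAcyclic := fun hH ↦ hpq <| Walk.edges_injective <| by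
    simpa using congrArg (·.1.edges) <| (hH.subsingleton_path u v).elim
      ⟨p.transfer H fun _ he ↦ mem_H (.inl he), hp.transfer _⟩
      ⟨q.transfer H fun _ he ↦ mem_H (.inr he), hq.transfer _⟩
  obtain ⟨x, c, hc, hHc⟩ := exists_egirth_eq_length.mpr hH
  have hcpq : c.edges ⊆ p.edges ++ q.edges := fun e he ↦ by
    have := c.edges_subset_edgeSet he
    rw [edgeSet_fromEdgeSet] at this
    simpa using this.1
  calc G.egirth ≤ H.egirth := egirth_anti hHG
    _ = c.edges.length := by rw [hHc, Walk.length_edges]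
    _ ≤ (p.edges ++ q.edges).length := by
      exact_mod_cast (hc.edges_nodup.subperm hcpq).length_le
    _ = p.length + q.length := by simp

lemma Walk.isPath_concat_of_length_eq_dist {z x y : V} {p : G.Walk z x}
    (hp : p.length = G.dist z x) (h : G.Adj x y) (hy : G.dist z x ≤ G.dist z y) :
    (p.concat h).IsPath := by
  classical
  refine (p.isPath_of_length_eq_dist hp).concat (fun hyp ↦ ?_) h
  have := dist_le (p.takeUntil y hyp)
  have := p.length_takeUntil_lt_length hyp h.ne.symm
  omega

theorem dist_ne_of_adj_of_lt_egirth {x y z : V} (hxy : G.Adj x y) (hzx : G.Reachable z x)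
    (hg : 2 * G.dist z x + 1 < G.egirth) : G.dist z x ≠ G.dist z y := by
  intro hd
  obtain ⟨p, -, hpl⟩ := hzx.exists_path_of_dist
  obtain ⟨q, hq, hql⟩ := (hzx.trans hxy.reachable).exists_path_of_dist
  have hpq : p.concat hxy ≠ q := fun h ↦ by
    simpa [hpl, hql, hd] using congrArg Walk.length h
  have h := egirth_le_length_add_length_of_ne
    (Walk.isPath_concat_of_length_eq_dist hpl hxy hd.le) hq hpq
  rw [Walk.length_concat, hpl, hql, ← hd] at h
  have := hg.trans_le h
  norm_cast at this
  omega

theorem subsingleton_closer_neighbors_of_lt_egirth {z w : V} (hg : 2 * G.dist z w < G.egirth) :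
    {x | G.Adj w x ∧ G.dist z x + 1 = G.dist z w}.Subsingleton := by
  rintro x ⟨hwx, hx⟩ y ⟨hwy, hy⟩
  by_contra hxy
  have hzw : G.Reachable z w := .of_dist_ne_zero (by omega)
  obtain ⟨p, -, hpl⟩ := (hzw.trans hwx.reachable).exists_path_of_dist
  obtain ⟨q, -, hql⟩ := (hzw.trans hwy.reachable).exists_path_of_dist
  have hpq : p.concat hwx.symm ≠ q.concat hwy.symm := fun h ↦ hxy (Walk.concat_inj h).1
  have h := egirth_le_length_add_length_of_ne
    (Walk.isPath_concat_of_length_eq_dist hpl hwx.symm (by omega))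
    (Walk.isPath_concat_of_length_eq_dist hql hwy.symm (by omega)) hpq
  rw [Walk.length_concat, Walk.length_concat, hpl, hql] at h
  have := hg.trans_le h
  norm_cast at this
  omega

section sideSphere

open Finset

variable [Fintype V]

variable (G) in
noncomputable def sideSphere (a b : V) (i : ℕ) : Finset V :=
  {x | G.dist a x = i ∧ G.dist b x = i + 1}

@[simp]
lemma mem_sideSphere {a b x : V} {i : ℕ} :
    x ∈ G.sideSphere a b i ↔ G.dist a x = i ∧ G.dist b x = i + 1 := by
  simp [sideSphere]

lemma sum_card_sideSphere_le (a b : V) (n : ℕ) :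
    ∑ i ∈ range n, (#(G.sideSphere a b i) + #(G.sideSphere b a i)) ≤ Fintype.card V := by
  classical
  have hdisj (i : ℕ) : Disjoint (G.sideSphere a b i) (G.sideSphere b a i) :=
    Finset.disjoint_left.mpr fun x h₁ h₂ ↦ by simp only [mem_sideSphere] at h₁ h₂; omega
  have hdisj' : (range n : Set ℕ).PairwiseDisjoint
      fun i ↦ G.sideSphere a b i ∪ G.sideSphere b a i :=
    fun i _ j _ hij ↦ Finset.disjoint_left.mpr fun x h₁ h₂ ↦ by
      simp only [mem_union, mem_sideSphere] at h₁ h₂; omega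
  calc ∑ i ∈ range n, (#(G.sideSphere a b i) + #(G.sideSphere b a i))
      = #((range n).biUnion fun i ↦ G.sideSphere a b i ∪ G.sideSphere b a i) := by
        rw [card_biUnion hdisj']
        exact sum_congr rfl fun i _ ↦ (card_union_of_disjoint (hdisj i)).symm
    _ ≤ Fintype.card V := card_le_univ _

variable [DecidableRel G.Adj] {r : ℕ}

lemma le_card_bipartiteAbove_sideSphere_succ (hreg : G.IsRegularOfDegree (r + 1)) {a b w : V}
    {i : ℕ} (hab : G.Adj a b) (hw : w ∈ G.sideSphere a b i) (hg : 2 * i + 3 < G.egirth) :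
    r ≤ #((G.sideSphere a b (i + 1)).bipartiteAbove G.Adj w) := by
  classical
  rw [mem_sideSphere] at hw
  have hbw : G.Reachable b w := .of_dist_ne_zero (by omega)
  have hcloser {x} (hwx : G.Adj w x) (hx : x ∉ G.sideSphere a b (i + 1)) :
      G.dist b x + 1 = G.dist b w := by
    have := dist_ne_of_adj_of_lt_egirth hwx hbw (by rw [hw.2]; exact_mod_cast hg)
    have : G.dist b x ≤ G.dist a x + 1 := by
      simpa [dist_eq_one_iff_adj.mpr hab.symm, add_comm] using
        hab.symm.reachable.dist_triangle_left x
    have := hwx.diff_dist_adj (u := a)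
    have := hwx.diff_dist_adj (u := b)
    rw [mem_sideSphere] at hx
    omega
  have hout : #((G.neighborFinset w).filter (· ∉ G.sideSphere a b (i + 1))) ≤ 1 := by
    refine card_le_one.mpr fun x hx y hy ↦ ?_
    simp only [mem_filter, mem_neighborFinset] at hx hy
    exact subsingleton_closer_neighbors_of_lt_egirth
      (by rw [hw.2]; exact lt_of_le_of_lt (by norm_cast; omega) hg)
      ⟨hx.1, hcloser hx.1 hx.2⟩ ⟨hy.1, hcloser hy.1 hy.2⟩
  have hin : (G.neighborFinset w).filter (· ∈ G.sideSphere a b (i + 1)) =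
      (G.sideSphere a b (i + 1)).bipartiteAbove G.Adj w := by
    ext; simp [bipartiteAbove, and_comm]
  have hsplit := card_filter_add_card_filter_not (s := G.neighborFinset w)
    (· ∈ G.sideSphere a b (i + 1))
  rw [hin, card_neighborFinset_eq_degree, hreg w] at hsplit
  omega

lemma card_bipartiteBelow_sideSphere_le_one {a b x : V} {i : ℕ}
    (hx : x ∈ G.sideSphere a b (i + 1)) (hg : 2 * i + 2 < G.egirth) :
    #((G.sideSphere a b i).bipartiteBelow G.Adj x) ≤ 1 := by
  rw [mem_sideSphere] at hx
  refine card_le_one.mpr fun w hw w' hw' ↦ ?_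
  simp only [mem_bipartiteBelow, mem_sideSphere] at hw hw'
  exact subsingleton_closer_neighbors_of_lt_egirth (by rw [hx.1]; exact_mod_cast hg)
    ⟨hw.2.symm, by omega⟩ ⟨hw'.2.symm, by omega⟩

lemma card_sideSphere_mul_le (hreg : G.IsRegularOfDegree (r + 1)) {a b : V} {i : ℕ}
    (hab : G.Adj a b) (hg : 2 * i + 3 < G.egirth) :
    #(G.sideSphere a b i) * r ≤ #(G.sideSphere a b (i + 1)) := by
  simpa using card_mul_le_card_mul G.Adj
    (fun w hw ↦ le_card_bipartiteAbove_sideSphere_succ hreg hab hw hg)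
    (fun x hx ↦ card_bipartiteBelow_sideSphere_le_one hx
      (lt_of_le_of_lt (by norm_cast; omega) hg))

lemma pow_le_card_sideSphere (hreg : G.IsRegularOfDegree (r + 1)) {a b : V} (hab : G.Adj a b) :
    ∀ {i : ℕ}, 2 * i + 1 < G.egirth → r ^ i ≤ #(G.sideSphere a b i)
  | 0, _ => by simpa using ⟨a, by simp [hab.symm]⟩
  | i + 1, hg => by
    have hg' : 2 * i + 3 < G.egirth := by convert hg using 1; push_cast; ring
    calc r ^ (i + 1) = r ^ i * r := pow_succ r i
      _ ≤ #(G.sideSphere a b i) * r := Nat.mul_le_mul_right r <|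
          pow_le_card_sideSphere hreg hab (lt_of_le_of_lt (by norm_cast; omega) hg')
      _ ≤ #(G.sideSphere a b (i + 1)) := card_sideSphere_mul_le hreg hab hg'

end sideSphere

end SimpleGraph

open SimpleGraph Finset in
theorem moore_bound_odd_general {V : Type*} [Fintype V] [Nonempty V]
    (G : SimpleGraph V) [DecidableRel G.Adj] (r s t : ℕ)
    (ht : t = 2 * s + 1)
    (hreg : G.IsRegularOfDegree (r + 1))
    (hgirth : ((t + 1 : ℕ) : ℕ∞) ≤ G.girth) :
    2 * ∑ i ∈ Finset.range (s + 1), r ^ i ≤ Fintype.card V := by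
  subst ht
  have hg {i : ℕ} (hi : i ∈ range (s + 1)) : 2 * i + 1 < G.egirth := by
    refine lt_of_lt_of_le ?_ (hgirth.trans G.egirth.natCast_toNat_le_self)
    rw [mem_range] at hi
    norm_cast
    omega
  obtain ⟨a⟩ := ‹Nonempty V›
  obtain ⟨b, hab⟩ := G.degree_pos_iff_exists_adj a |>.mp (by rw [hreg a]; omega)
  calc 2 * ∑ i ∈ range (s + 1), r ^ i = ∑ i ∈ range (s + 1), (r ^ i + r ^ i) := by
        rw [two_mul, sum_add_distrib]
    _ ≤ ∑ i ∈ range (s + 1), (#(G.sideSphere a b i) + #(G.sideSphere b a i)) :=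
        sum_le_sum fun i hi ↦ add_le_add (pow_le_card_sideSphere hreg hab (hg hi))
          (pow_le_card_sideSphere hreg hab.symm (hg hi))
    _ ≤ Fintype.card V := sum_card_sideSphere_le a b (s + 1)

/-- Moore bound, odd case: any `(r+1)`-regular graph with girth at least `t+1`,
`t = 2s+1`, has at least `2 ∑_{i=0}^{s} r^i` vertices. -/
theorem moore_bound_odd {V : Type*} [Fintype V] [Nonempty V] [DecidableEq V]
    (G : SimpleGraph V) [DecidableRel G.Adj] (r s t : ℕ) (hr : 1 ≤ r)
    (ht : t = 2 * s + 1)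
    (hreg : G.IsRegularOfDegree (r + 1))
    (hgirth : ((t + 1 : ℕ) : ℕ∞) ≤ G.girth) :
    2 * ∑ i ∈ Finset.range (s + 1), r ^ i ≤ Fintype.card V :=
  moore_bound_odd_general G r s t ht hreg hgirth
end

section
/- Let r ≥ 3, s ≥ 1, t = 2s+1. Define n = ∑_{i=0}^{s} a_0 r^i and k = a_0 r^s - a_0 r^{s-1}·(r/(r+1)) (for a_0 a positive multiple of r+1). Then k/n = r^{s+1} / (r^{s+1} + 2∑_{i=1}^{s} r^i + 1). -/
/-- For `t = 2s+1` odd (`s ≥ 1`), the rate of a rate-optimal sequential-recovery LRC with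
block length `n = ∑_{i=0}^{s} a_0 r^i` and dimension
`k = a_0 r^s - a_0 r^{s-1} · r/(r+1)` equals
`r^{s+1} / (r^{s+1} + 2 ∑_{i=1}^{s} r^i + 1)`. -/
theorem rate_identity_t_odd (r s a0 : ℕ) (hr : 3 ≤ r) (hs : 1 ≤ s) (ha0 : 0 < a0)
    (hmult : (r + 1) ∣ a0)
    (n k : ℚ)
    (hn : n = ∑ i ∈ Finset.range (s + 1), (a0 : ℚ) * (r : ℚ) ^ i)
    (hk : k = (a0 : ℚ) * (r : ℚ) ^ s - (a0 : ℚ) * (r : ℚ) ^ (s - 1) * ((r : ℚ) / ((r : ℚ) + 1))) :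
    k / n = (r : ℚ) ^ (s + 1) /
      ((r : ℚ) ^ (s + 1) + 2 * ∑ i ∈ Finset.Icc 1 s, (r : ℚ) ^ i + 1) := by
  set q : ℚ := (r : ℚ) with hqdef
  have hq3 : (3 : ℚ) ≤ q := by rw [hqdef]; exact_mod_cast hr
  have hq0 : q ≠ 0 := by linarith
  have hq1 : q + 1 ≠ 0 := by linarith
  have hqpos : 0 < q := by linarith
  set S : ℚ := ∑ i ∈ Finset.range (s + 1), q ^ i with hSdef
  have hSpos : 0 < S := by
    apply Finset.sum_pos
    · intro i _; positivity
    · exact Finset.nonempty_range_iff.mpr (Nat.succ_ne_zero s)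
  have hSne : S ≠ 0 := ne_of_gt hSpos
  have ha0q : (a0 : ℚ) ≠ 0 := by exact_mod_cast ha0.ne'
  -- n = a0 * S
  have hn' : n = (a0 : ℚ) * S := by rw [hn, hSdef, Finset.mul_sum]
  -- geometric sum identity
  have hgeom : S * (q - 1) = q ^ (s + 1) - 1 := geom_sum_mul q (s + 1)
  -- the Icc sum in terms of S
  have hT : ∑ i ∈ Finset.Icc 1 s, q ^ i = S - 1 := by
    have h1 : Finset.range (s + 1) = Finset.Ico 0 (s + 1) := by
      rw [Finset.range_eq_Ico]
    have h2 : Finset.Icc 1 s = Finset.Ico 1 (s + 1) := by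
      rw [Finset.Ico_add_one_right_eq_Icc]
    have h3 : S = q ^ 0 + ∑ i ∈ Finset.Ico 1 (s + 1), q ^ i := by
      rw [hSdef, h1]
      exact Finset.sum_eq_sum_Ico_succ_bot (Nat.succ_pos s) _
    rw [h2]
    rw [h3]
    ring
  -- k = a0 * q^(s+1) / (q+1)
  have hpow : q ^ (s - 1) * q ^ 2 = q ^ (s + 1) := by
    rw [← pow_add]
    congr 1
    omega
  have hpow2 : q ^ (s - 1) * q = q ^ s := by
    rw [← pow_succ]
    congr 1
    omega
  have hk' : k = (a0 : ℚ) * q ^ (s + 1) / (q + 1) := by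
    rw [hk]
    field_simp
    rw [← hpow, ← hpow2]
    ring
  rw [hk', hn', hT]
  have hden : q ^ (s + 1) + 2 * (S - 1) + 1 = (q + 1) * S := by
    have : q ^ (s + 1) = S * (q - 1) + 1 := by linarith [hgeom]
    rw [this]; ring
  rw [hden]
  rw [div_div, div_eq_div_iff (by positivity) (by positivity)]
  ring
end

section
/- Let a_0, a_1, ..., a_{t/2}, p, m, n be nonnegative reals with r ≥ 3 and t ≥ 4 even, satisfying: a_i ≤ r·a_{i-1} for 1 ≤ i ≤ t/2 - 1; ∑_{i=0}^{t/2-1} a_i + p = m; 2a_{t/2} ≤ (a_{t/2-1} + p)(r+1) - a_{t/2-1}; and m(r+1) ≥ 3n - 2a_0 - ∑_{i=1}^{t/2} a_i. Then m ≥ n · (2∑_{i=0}^{t/2-1} r^i)/(r^{t/2} + 2∑_{i=0}^{t/2-1} r^i). -/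
open Finset in
private lemma key_chain (r s : ℕ) (hr : 3 ≤ r) (hs : 2 ≤ s) (a : ℕ → ℝ)
    (h1 : ∀ i, 1 ≤ i → i ≤ s - 1 → a i ≤ (r : ℝ) * a (i - 1)) :
    2 * (∑ i ∈ range s, (r : ℝ) ^ i) * a 0
      + (∑ i ∈ range s, (r : ℝ) ^ i) * (r : ℝ) * a (s - 1)
      ≤ ((r : ℝ) ^ s + 2) * ∑ i ∈ range s, a i := by
  have hR3 : (3 : ℝ) ≤ (r : ℝ) := by exact_mod_cast hr
  set R : ℝ := (r : ℝ) with hRdef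
  set T : ℕ → ℝ := fun k => ∑ i ∈ range k, R ^ i with hT
  have hTnonneg : ∀ k, 0 ≤ T k := fun k =>
    Finset.sum_nonneg fun i _ => pow_nonneg (by linarith) i
  have hTmono : ∀ j k, j ≤ k → T j ≤ T k := fun j k h =>
    Finset.sum_le_sum_of_subset_of_nonneg (Finset.range_subset_range.2 h)
      (fun i _ _ => pow_nonneg (by linarith) i)
  have hTsucc : ∀ k, T (k + 1) = R * T k + 1 := fun k => geom_sum_succ
  have hTS : T s * R = T s + R ^ s - 1 := by
    have := geom_sum_mul R s
    nlinarith [this]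
  set S : ℝ := T s with hSdef
  set lam : ℕ → ℝ := fun j => S - 3 * T (s - j) with hlam
  have lam_nonneg : ∀ j, 1 ≤ j → 0 ≤ lam j := by
    intro j hj
    have hmono : T (s - j) ≤ T (s - 1) := hTmono _ _ (by omega)
    have hsucc : S = R * T (s - 1) + 1 := by
      have := hTsucc (s - 1)
      rw [show s - 1 + 1 = s from by omega] at this
      rw [hSdef, this]
    simp only [hlam]
    nlinarith [hTnonneg (s - 1)]
  have lam_step : ∀ j, 1 ≤ j → j ≤ s - 2 → lam (j + 1) * R = lam j + (R ^ s + 2) := by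
    intro j hj hj2
    have hsucc : T (s - j) = R * T (s - j - 1) + 1 := by
      have := hTsucc (s - j - 1)
      rw [show s - j - 1 + 1 = s - j from by omega] at this
      exact this
    simp only [hlam, show s - (j + 1) = s - j - 1 from by omega]
    nlinarith [hTS, hsucc]
  -- the descending chain statement
  have main : ∀ k, k ≤ s - 2 →
      S * R * a (s - 1) ≤ (R ^ s + 2) * (∑ j ∈ Finset.Ico (s - 1 - k) s, a j)
        + lam (s - 1 - k) * R * a (s - 2 - k) := by
    intro k
    induction k with
    | zero =>
      intro _
      have hIco : Finset.Ico (s - 1) s = {s - 1} := by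
        have h := Nat.Ico_succ_singleton (s - 1)
        rwa [show s - 1 + 1 = s from by omega] at h
      have hlamval : lam (s - 1) = S - 3 := by
        simp only [hlam, show s - (s - 1) = 1 from by omega]
        simp [hT]
      have hchain : a (s - 1) ≤ R * a (s - 2) := by
        have := h1 (s - 1) (by omega) le_rfl
        rwa [show s - 1 - 1 = s - 2 from by omega] at this
      have hge : (3 : ℝ) ≤ S := by
        have := lam_nonneg (s - 1) (by omega)
        rw [hlamval] at this; linarith
      simp only [Nat.sub_zero]
      rw [hIco, Finset.sum_singleton, hlamval]
      have h6 : (S - 3) * a (s - 1) ≤ (S - 3) * (R * a (s - 2)) :=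
        mul_le_mul_of_nonneg_left hchain (by linarith)
      have hexp : S * R * a (s - 1) = (R ^ s + 2) * a (s - 1) + (S - 3) * a (s - 1) := by
        rw [hTS]; ring
      rw [hexp]
      nlinarith [h6]
    | succ k ih =>
      intro hk
      have IH := ih (by omega)
      have hj1 : (1 : ℕ) ≤ s - 2 - k := by omega
      have hj2 : s - 2 - k ≤ s - 2 := by omega
      set j : ℕ := s - 2 - k with hjdef
      have hstep := lam_step j hj1 hj2
      have hchain : a j ≤ R * a (j - 1) := h1 j hj1 (by omega)
      have hlamj := lam_nonneg j hj1
      have e1 : s - 1 - k = j + 1 := by omega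
      have e2 : s - 1 - (k + 1) = j := by omega
      have e3 : s - 2 - (k + 1) = j - 1 := by omega
      rw [e1] at IH
      rw [e2, e3]
      have hsum : ∑ x ∈ Finset.Ico j s, a x = a j + ∑ x ∈ Finset.Ico (j + 1) s, a x :=
        Finset.sum_eq_sum_Ico_succ_bot (by omega) a
      have h5 : lam (j + 1) * R * a j = (R ^ s + 2) * a j + lam j * a j := by
        rw [hstep]; ring
      have h6 : lam j * a j ≤ lam j * (R * a (j - 1)) :=
        mul_le_mul_of_nonneg_left hchain hlamj
      rw [hsum]
      nlinarith [IH]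
  have final := main (s - 2) (le_refl _)
  rw [show s - 1 - (s - 2) = 1 from by omega, show s - 2 - (s - 2) = 0 from by omega] at final
  have hlam1 : lam 1 * R = R ^ s + 2 - 2 * S := by
    have hsucc : S = R * T (s - 1) + 1 := by
      have := hTsucc (s - 1)
      rw [show s - 1 + 1 = s from by omega] at this
      rw [hSdef, this]
    simp only [hlam]
    nlinarith [hTS]
  have hsplit : ∑ i ∈ range s, a i = a 0 + ∑ x ∈ Finset.Ico 1 s, a x := by
    rw [Finset.range_eq_Ico]
    exact Finset.sum_eq_sum_Ico_succ_bot (by omega) a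
  rw [hlam1] at final
  rw [hsplit]
  linarith

/-- Linear-programming core of the rate bound for `t` even: the counting inequalities on
the block sizes of the staircase parity-check matrix imply the lower bound on the
redundancy `m`. -/
theorem lp_rate_bound_t_even (r t : ℕ) (hr : 3 ≤ r) (ht : 4 ≤ t) (hte : Even t)
    (a : ℕ → ℝ) (p m n : ℝ)
    (ha : ∀ i ≤ t / 2, 0 ≤ a i) (hp : 0 ≤ p) (hm : 0 ≤ m) (hn : 0 ≤ n)
    (h1 : ∀ i, 1 ≤ i → i ≤ t / 2 - 1 → a i ≤ (r : ℝ) * a (i - 1))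
    (h2 : ∑ i ∈ Finset.range (t / 2), a i + p = m)
    (h3 : 2 * a (t / 2) ≤ (a (t / 2 - 1) + p) * ((r : ℝ) + 1) - a (t / 2 - 1))
    (h4 : m * ((r : ℝ) + 1) ≥ 3 * n - 2 * a 0 - ∑ i ∈ Finset.Icc 1 (t / 2), a i) :
    m ≥ n * (2 * ∑ i ∈ Finset.range (t / 2), (r : ℝ) ^ i) /
      ((r : ℝ) ^ (t / 2) + 2 * ∑ i ∈ Finset.range (t / 2), (r : ℝ) ^ i) := by
  have hR3 : (3 : ℝ) ≤ (r : ℝ) := by exact_mod_cast hr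
  set s : ℕ := t / 2 with hsdef
  have hs2 : 2 ≤ s := by omega
  set R : ℝ := (r : ℝ) with hRdef
  set S : ℝ := ∑ i ∈ Finset.range s, R ^ i with hSdef
  set X : ℝ := ∑ i ∈ Finset.range s, a i with hXdef
  set P : ℝ := R ^ s with hPdef
  have key := key_chain r s hr hs2 a h1
  rw [← hSdef, ← hXdef, ← hPdef, ← hRdef] at key
  have hS0 : 0 ≤ S := Finset.sum_nonneg fun i _ => pow_nonneg (by linarith) i
  have hP1 : (1 : ℝ) ≤ P := one_le_pow₀ (by linarith)
  have hSR : S * R = S + P - 1 := by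
    have := geom_sum_mul R s
    rw [← hSdef, ← hPdef] at this
    nlinarith [this]
  -- rewrite h3
  have h3' : 2 * a s ≤ R * a (s - 1) + (R + 1) * p := by
    have e : (a (s - 1) + p) * (R + 1) - a (s - 1) = R * a (s - 1) + (R + 1) * p := by ring
    rw [e] at h3
    exact h3
  -- decompose sums
  have hIccs : ∑ i ∈ Finset.Icc 1 s, a i = (∑ i ∈ Finset.Ico 1 s, a i) + a s := by
    rw [← Finset.Ico_add_one_right_eq_Icc]
    exact Finset.sum_Ico_succ_top (by omega) a
  have hX : X = a 0 + ∑ i ∈ Finset.Ico 1 s, a i := by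
    rw [hXdef, Finset.range_eq_Ico]
    exact Finset.sum_eq_sum_Ico_succ_bot (by omega) a
  have h4' : 3 * n ≤ m * (R + 1) + a 0 + X + a s := by
    rw [hIccs] at h4
    linarith [h4]
  -- multiply by S
  have m1 : S * (3 * n) ≤ S * (m * (R + 1) + a 0 + X + a s) :=
    mul_le_mul_of_nonneg_left h4' hS0
  have m2 : S * (2 * a s) ≤ S * (R * a (s - 1) + (R + 1) * p) :=
    mul_le_mul_of_nonneg_left h3' hS0
  have e1 : S * (m * (R + 1)) = (2 * S + P - 1) * m := by
    rw [show S * (m * (R + 1)) = (S * R) * m + S * m by ring, hSR]; ring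
  have e2 : S * ((R + 1) * p) = (2 * S + P - 1) * p := by
    rw [show S * ((R + 1) * p) = (S * R) * p + S * p by ring, hSR]; ring
  have e3 : S * X + S * p = S * m := by
    rw [show S * X + S * p = S * (X + p) by ring, h2]
  have e4 : P * X + P * p = P * m := by
    rw [show P * X + P * p = P * (X + p) by ring, h2]
  have c1 : 2 * S * n ≤ (2 * S + P) * m := by
    nlinarith [m1, m2, key, e1, e2, e3, e4, h2, hp]
  have hpos : 0 < P + 2 * S := by linarith
  rw [ge_iff_le, div_le_iff₀ hpos]
  nlinarith [c1]
end
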